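/- (General global convergence, strong Wolfe) Assume Assumptions A1 and A2 hold for x⁰, and consider the conjugate gradient iteration with Σ_{k≥0} 1/‖d^k‖² = +∞. If β_k ≥ 0 for all k ≥ 1, each d^k satisfies ψ_{x^k}(d^k) < 0, and each t_k satisfies the strong Wolfe conditions at x^k along d^k, then liminf_{k→∞} ‖v(x^k)‖ = 0. -/

import Mathlib

open scoped BigOperators

noncomputable def pd (n : ℕ) (F : EuclideanSpace ℝ (Fin n) → ℝ)
    (x : EuclideanSpace ℝ (Fin n)) (j : Fin n) : ℝ :=
  fderiv ℝ F x (EuclideanSpace.single j (1 : ℝ))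

noncomputable def glo (n : ℕ) (F H : EuclideanSpace ℝ (Fin n) → ℝ)
    (x : EuclideanSpace ℝ (Fin n)) (j : Fin n) : ℝ :=
  min (pd n F x j) (pd n H x j)

noncomputable def ghi (n : ℕ) (F H : EuclideanSpace ℝ (Fin n) → ℝ)
    (x : EuclideanSpace ℝ (Fin n)) (j : Fin n) : ℝ :=
  max (pd n F x j) (pd n H x j)

noncomputable def gloVec (n : ℕ) (F H : EuclideanSpace ℝ (Fin n) → ℝ)
    (x : EuclideanSpace ℝ (Fin n)) : EuclideanSpace ℝ (Fin n) :=
  WithLp.toLp 2 (fun j => glo n F H x j)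

noncomputable def ghiVec (n : ℕ) (F H : EuclideanSpace ℝ (Fin n) → ℝ)
    (x : EuclideanSpace ℝ (Fin n)) : EuclideanSpace ℝ (Fin n) :=
  WithLp.toLp 2 (fun j => ghi n F H x j)

noncomputable def psi (m n : ℕ) (Gl Gu : Fin m → EuclideanSpace ℝ (Fin n) → ℝ)
    (x v : EuclideanSpace ℝ (Fin n)) : ℝ :=
  ⨆ i : Fin m, (1 / 2 : ℝ) *
    ((∑ j : Fin n, (glo n (Gl i) (Gu i) x j + ghi n (Gl i) (Gu i) x j) * v j) +
     (∑ j : Fin n, (ghi n (Gl i) (Gu i) x j - glo n (Gl i) (Gu i) x j) * |v j|))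

def LevelSet (m n : ℕ) (Gl Gu : Fin m → EuclideanSpace ℝ (Fin n) → ℝ)
    (x0 : EuclideanSpace ℝ (Fin n)) : Set (EuclideanSpace ℝ (Fin n)) :=
  {x | ∀ i : Fin m, Gl i x ≤ Gl i x0 ∧ Gu i x ≤ Gu i x0}

def StdWolfe (m n : ℕ) (Gl Gu : Fin m → EuclideanSpace ℝ (Fin n) → ℝ)
    (ρ σ : ℝ) (x d : EuclideanSpace ℝ (Fin n)) (t : ℝ) : Prop :=
  (∀ i : Fin m,
      Gl i (x + t • d) ≤ Gl i x + ρ * t * psi m n Gl Gu x d ∧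
      Gu i (x + t • d) ≤ Gu i x + ρ * t * psi m n Gl Gu x d) ∧
  σ * psi m n Gl Gu x d ≤ psi m n Gl Gu (x + t • d) d

def StrongWolfe (m n : ℕ) (Gl Gu : Fin m → EuclideanSpace ℝ (Fin n) → ℝ)
    (ρ σ : ℝ) (x d : EuclideanSpace ℝ (Fin n)) (t : ℝ) : Prop :=
  (∀ i : Fin m,
      Gl i (x + t • d) ≤ Gl i x + ρ * t * psi m n Gl Gu x d ∧
      Gu i (x + t • d) ≤ Gu i x + ρ * t * psi m n Gl Gu x d) ∧
  |psi m n Gl Gu (x + t • d) d| ≤ σ * |psi m n Gl Gu x d|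

def AssumptionA1 (m n : ℕ) (Gl Gu : Fin m → EuclideanSpace ℝ (Fin n) → ℝ)
    (x0 : EuclideanSpace ℝ (Fin n)) : Prop :=
  ∀ i : Fin m, ∃ L : ℝ, 0 < L ∧
    ∀ y ∈ LevelSet m n Gl Gu x0, ∀ z ∈ LevelSet m n Gl Gu x0,
      ‖gloVec n (Gl i) (Gu i) y - gloVec n (Gl i) (Gu i) z‖ ≤ L * ‖y - z‖ ∧
      ‖ghiVec n (Gl i) (Gu i) y - ghiVec n (Gl i) (Gu i) z‖ ≤ L * ‖y - z‖

def AssumptionA2 (m n : ℕ) (Gl Gu : Fin m → EuclideanSpace ℝ (Fin n) → ℝ)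
    (x0 : EuclideanSpace ℝ (Fin n)) : Prop :=
  ∀ y : ℕ → EuclideanSpace ℝ (Fin n),
    (∀ k, y k ∈ LevelSet m n Gl Gu x0) →
    (∀ (i : Fin m) (k : ℕ), Gl i (y (k+1)) ≤ Gl i (y k) ∧ Gu i (y (k+1)) ≤ Gu i (y k)) →
    ∀ i : Fin m, (∃ Cl : ℝ, ∀ k, Cl ≤ Gl i (y k)) ∧ (∃ Cu : ℝ, ∀ k, Cu ≤ Gu i (y k))

/-!
For fixed `x`, `ψ_x` is a maximum of finitely many sublinear functions of `v`, hence sublinear, and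
by A1 it is Lipschitz in `x` on the level set: `ψ_x(v) ≤ ψ_y(v) + C‖x - y‖‖v‖`. The sufficient
decrease condition (W1) and A2 make `∑ t_k (-ψ_{x^k}(d^k))` finite, while (W2') with the Lipschitz
bound gives `(1 - σ)(-ψ_{x^k}(d^k)) ≤ C t_k ‖d^k‖²`; together they yield Zoutendijk's condition
`∑ (ψ_{x^k}(d^k) / ‖d^k‖)² < ∞`.

Comparing `v(x)` with `w = 0` gives `ψ_x(v(x)) ≤ -‖v(x)‖²/2`, so sublinearity, `d^{k+1} = v(x^{k+1}) + β d^k`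
and (W2') give `‖v(x^{k+1})‖²/2 ≤ -ψ_{x^{k+1}}(d^{k+1}) + σ β_{k+1} (-ψ_{x^k}(d^k))`. If `‖v(x^k)‖ ≥ γ > 0`
eventually, this bounds `1/‖d^{k+1}‖²` by a multiple of `u_{k+1}² + σ² u_k²`, with
`u_k = ψ_{x^k}(d^k)/‖d^k‖`, which is summable: this contradicts `∑ 1/‖d^k‖² = ∞`.
-/

open Filter Topology

theorem liminf_eq_zero_of_frequently_lt {ι : Type*} {f : Filter ι} {V : ι → ℝ}
    (h0 : ∀ i, 0 ≤ V i) (h : ∀ γ > 0, ∃ᶠ i in f, V i < γ) : liminf V f = 0 := by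
  have hbdd : IsBoundedUnder (· ≥ ·) f V := isBoundedUnder_of ⟨0, h0⟩
  have hcobdd : IsCoboundedUnder (· ≥ ·) f V := ⟨1, fun a ha => by
    obtain ⟨i, hai, hi⟩ := ((eventually_map.1 ha).and_frequently (h 1 one_pos)).exists
    exact hai.trans hi.le⟩
  refine le_antisymm (le_of_forall_pos_le_add fun γ hγ => ?_)
    (le_liminf_of_le hcobdd (.of_forall h0))
  exact liminf_le_of_frequently_le ((h γ hγ).mono fun _ hi => by linarith) hbdd

theorem summable_of_le_sub_succ {a f : ℕ → ℝ} {c : ℝ} (ha : ∀ k, 0 ≤ a k)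
    (h : ∀ k, a k ≤ f k - f (k + 1)) (hf : ∀ k, c ≤ f k) : Summable a :=
  summable_of_sum_range_le ha fun N => calc
    ∑ k ∈ Finset.range N, a k ≤ ∑ k ∈ Finset.range N, (f k - f (k + 1)) :=
      Finset.sum_le_sum fun k _ => h k
    _ = f 0 - f N := Finset.sum_range_sub' f N
    _ ≤ f 0 - c := by linarith [hf N]

theorem sum_mul_le_norm_mul_norm {ι : Type*} [Fintype ι] (a v : EuclideanSpace ℝ ι) {w : ι → ℝ}
    (hw : ∀ j, |w j| = |v j|) : ∑ j, a j * w j ≤ ‖a‖ * ‖v‖ := by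
  have hsq : ∀ j, w j ^ 2 = v j ^ 2 := fun j => by rw [← sq_abs, hw, sq_abs]
  calc ∑ j, a j * w j ≤ √(∑ j, a j ^ 2) * √(∑ j, w j ^ 2) := Real.sum_mul_le_sqrt_mul_sqrt _ _ _
    _ = ‖a‖ * ‖v‖ := by simp only [EuclideanSpace.norm_eq, Real.norm_eq_abs, sq_abs, hsq]

theorem one_div_sq_le_of_half_sq_le {γ D V u a : ℝ} (hγ : 0 < γ) (hD : 0 < D) (haγ : a ≤ γ / 4)
    (hV : γ ≤ V) (h : V ^ 2 / 2 ≤ u * D + a * (D + V)) :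
    1 / D ^ 2 ≤ 32 / γ ^ 4 * (u ^ 2 + a ^ 2) := by
  have hquarter : γ ^ 2 ≤ 4 * ((u + a) * D) := by nlinarith
  have hsq : (γ ^ 2) ^ 2 ≤ (4 * ((u + a) * D)) ^ 2 := pow_le_pow_left₀ (by positivity) hquarter 2
  rw [div_le_iff₀ (by positivity), div_mul_eq_mul_div, div_mul_eq_mul_div,
    le_div_iff₀ (by positivity)]
  nlinarith [sq_nonneg (u - a), sq_nonneg D]

theorem frequently_lt_of_not_summable_inv_sq {s D V β : ℕ → ℝ} {c γ : ℝ} (hc : 0 ≤ c)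
    (hγ : 0 < γ) (hs : ∀ k, 0 ≤ s k) (hD : ∀ k, 0 < D k)
    (hsum : Summable fun k => (s k / D k) ^ 2) (hdiv : ¬Summable fun k => 1 / D k ^ 2)
    (hV : ∀ k, V (k + 1) ^ 2 / 2 ≤ s (k + 1) + c * β (k + 1) * s k)
    (hβD : ∀ k, β (k + 1) * D k ≤ D (k + 1) + V (k + 1)) :
    ∃ᶠ k in atTop, V k < γ := by
  set u := fun k => s k / D k with hu
  have hsmall : ∀ᶠ k in atTop, c * u k ≤ γ / 4 := by
    have h0 : Tendsto (fun k => (c * u k) ^ 2) atTop (𝓝 0) := by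
      simpa [mul_pow] using hsum.tendsto_atTop_zero.const_mul (c ^ 2)
    filter_upwards [h0.eventually_le_const (show (0 : ℝ) < (γ / 4) ^ 2 by positivity)] with k hk
    exact le_of_pow_le_pow_left₀ two_ne_zero (by positivity) hk
  by_contra! hev
  refine hdiv ((summable_nat_add_iff 1).1 ?_)
  have hsum' : Summable fun k => 32 / γ ^ 4 * (u (k + 1) ^ 2 + (c * u k) ^ 2) := by
    refine (((summable_nat_add_iff 1).2 hsum).add ?_).mul_left _
    simpa [mul_pow] using hsum.mul_left (c ^ 2)
  refine hsum'.of_norm_bounded_eventually_nat ?_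
  filter_upwards [hsmall, (tendsto_add_atTop_nat 1).eventually hev] with k hk hVk
  rw [Real.norm_of_nonneg (by positivity)]
  refine one_div_sq_le_of_half_sq_le hγ (hD _) hk hVk ?_
  calc V (k + 1) ^ 2 / 2 ≤ s (k + 1) + c * β (k + 1) * s k := hV k
    _ = u (k + 1) * D (k + 1) + c * u k * (β (k + 1) * D k) := by
      simp only [hu]; field_simp [(hD k).ne', (hD (k + 1)).ne']
    _ ≤ u (k + 1) * D (k + 1) + c * u k * (D (k + 1) + V (k + 1)) := by
      gcongr
      · exact mul_nonneg hc (div_nonneg (hs k) (hD k).le)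
      · exact hβD k

section Scalarization

variable {m n : ℕ} {Gl Gu : Fin m → EuclideanSpace ℝ (Fin n) → ℝ}

noncomputable def psiComponent (Gl Gu : Fin m → EuclideanSpace ℝ (Fin n) → ℝ) (i : Fin m)
    (x v : EuclideanSpace ℝ (Fin n)) : ℝ :=
  (1 / 2 : ℝ) *
    ((∑ j : Fin n, (glo n (Gl i) (Gu i) x j + ghi n (Gl i) (Gu i) x j) * v j) +
     (∑ j : Fin n, (ghi n (Gl i) (Gu i) x j - glo n (Gl i) (Gu i) x j) * |v j|))

theorem psiComponent_le_psi (i : Fin m) (x v : EuclideanSpace ℝ (Fin n)) :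
    psiComponent Gl Gu i x v ≤ psi m n Gl Gu x v :=
  le_ciSup (f := fun i => psiComponent Gl Gu i x v) (Set.finite_range _).bddAbove i

theorem psi_le_of_forall_psiComponent_le [Nonempty (Fin m)] {x v : EuclideanSpace ℝ (Fin n)}
    {a : ℝ} (h : ∀ i, psiComponent Gl Gu i x v ≤ a) : psi m n Gl Gu x v ≤ a :=
  ciSup_le h

theorem psi_zero [Nonempty (Fin m)] (x : EuclideanSpace ℝ (Fin n)) : psi m n Gl Gu x 0 = 0 := by
  simp [psi]

theorem psiComponent_add_le (i : Fin m) (x u v : EuclideanSpace ℝ (Fin n)) :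
    psiComponent Gl Gu i x (u + v) ≤ psiComponent Gl Gu i x u + psiComponent Gl Gu i x v := by
  have habs : ∑ j, (ghi n (Gl i) (Gu i) x j - glo n (Gl i) (Gu i) x j) * |u j + v j| ≤
      ∑ j, (ghi n (Gl i) (Gu i) x j - glo n (Gl i) (Gu i) x j) * |u j| +
        ∑ j, (ghi n (Gl i) (Gu i) x j - glo n (Gl i) (Gu i) x j) * |v j| := by
    rw [← Finset.sum_add_distrib]
    gcongr with j
    rw [← mul_add]
    exact mul_le_mul_of_nonneg_left (abs_add_le _ _) (sub_nonneg.2 min_le_max)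
  simp only [psiComponent, PiLp.add_apply, mul_add, Finset.sum_add_distrib]
  linarith

theorem psiComponent_smul (i : Fin m) (x v : EuclideanSpace ℝ (Fin n)) {c : ℝ} (hc : 0 ≤ c) :
    psiComponent Gl Gu i x (c • v) = c * psiComponent Gl Gu i x v := by
  simp only [psiComponent, PiLp.smul_apply, smul_eq_mul, abs_mul, abs_of_nonneg hc,
    mul_left_comm _ c, ← Finset.mul_sum]
  ring

theorem psi_add_le [Nonempty (Fin m)] (x u v : EuclideanSpace ℝ (Fin n)) :
    psi m n Gl Gu x (u + v) ≤ psi m n Gl Gu x u + psi m n Gl Gu x v :=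
  psi_le_of_forall_psiComponent_le fun i => (psiComponent_add_le i x u v).trans
    (add_le_add (psiComponent_le_psi i x u) (psiComponent_le_psi i x v))

theorem psi_smul_le [Nonempty (Fin m)] (x v : EuclideanSpace ℝ (Fin n)) {c : ℝ} (hc : 0 ≤ c) :
    psi m n Gl Gu x (c • v) ≤ c * psi m n Gl Gu x v :=
  psi_le_of_forall_psiComponent_le fun i => by
    rw [psiComponent_smul i x v hc]
    exact mul_le_mul_of_nonneg_left (psiComponent_le_psi i x v) hc

theorem psiComponent_le_add_of_lipschitz (i : Fin m) {x y : EuclideanSpace ℝ (Fin n)}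
    (v : EuclideanSpace ℝ (Fin n)) {L : ℝ}
    (hlo : ‖gloVec n (Gl i) (Gu i) x - gloVec n (Gl i) (Gu i) y‖ ≤ L * ‖x - y‖)
    (hhi : ‖ghiVec n (Gl i) (Gu i) x - ghiVec n (Gl i) (Gu i) y‖ ≤ L * ‖x - y‖) :
    psiComponent Gl Gu i x v ≤ psiComponent Gl Gu i y v + 2 * L * ‖x - y‖ * ‖v‖ := by
  set Δlo := gloVec n (Gl i) (Gu i) x - gloVec n (Gl i) (Gu i) y
  set Δhi := ghiVec n (Gl i) (Gu i) x - ghiVec n (Gl i) (Gu i) y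
  have hbound : ∀ (a : EuclideanSpace ℝ (Fin n)) (w : Fin n → ℝ), ‖a‖ ≤ L * ‖x - y‖ →
      (∀ j, |w j| = |v j|) → ∑ j, a j * w j ≤ L * ‖x - y‖ * ‖v‖ := fun a w ha hw =>
    (sum_mul_le_norm_mul_norm a v hw).trans (mul_le_mul_of_nonneg_right ha (norm_nonneg v))
  have h1 := hbound Δlo v hlo fun _ => rfl
  have h2 := hbound Δhi v hhi fun _ => rfl
  have h3 := hbound Δhi (|v ·|) hhi fun _ => abs_abs _
  have h4 := hbound (-Δlo) (|v ·|) (by rwa [norm_neg]) fun _ => abs_abs _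
  simp only [Δlo, Δhi, gloVec, ghiVec, PiLp.sub_apply, PiLp.neg_apply, sub_mul, neg_mul,
    Finset.sum_sub_distrib, Finset.sum_neg_distrib] at h1 h2 h3 h4
  simp only [psiComponent, add_mul, sub_mul, Finset.sum_add_distrib, Finset.sum_sub_distrib]
  linarith

theorem ne_zero_of_psi_neg [Nonempty (Fin m)] {x d : EuclideanSpace ℝ (Fin n)}
    (h : psi m n Gl Gu x d < 0) : d ≠ 0 := by
  rintro rfl
  exact (psi_zero x).not_lt h

theorem AssumptionA1.exists_psi_le_add [Nonempty (Fin m)] {x0 : EuclideanSpace ℝ (Fin n)}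
    (hA1 : AssumptionA1 m n Gl Gu x0) :
    ∃ C : ℝ, ∀ x ∈ LevelSet m n Gl Gu x0, ∀ y ∈ LevelSet m n Gl Gu x0, ∀ v,
      psi m n Gl Gu x v ≤ psi m n Gl Gu y v + C * ‖x - y‖ * ‖v‖ := by
  choose L hL0 hL using hA1
  refine ⟨2 * ∑ i, L i, fun x hx y hy v => psi_le_of_forall_psiComponent_le fun i => ?_⟩
  have hLi : L i * ‖x - y‖ ≤ (∑ i, L i) * ‖x - y‖ := mul_le_mul_of_nonneg_right
    (Finset.single_le_sum (fun i _ => (hL0 i).le) (Finset.mem_univ i)) (norm_nonneg _)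
  have := psiComponent_le_add_of_lipschitz i v
    ((hL i x hx y hy).1.trans hLi) ((hL i x hx y hy).2.trans hLi)
  linarith [psiComponent_le_psi (Gl := Gl) (Gu := Gu) i y v]

end Scalarization

section Iteration

variable {m n : ℕ} {Gl Gu : Fin m → EuclideanSpace ℝ (Fin n) → ℝ}

theorem mem_levelSet_of_forall_succ_le {x : ℕ → EuclideanSpace ℝ (Fin n)}
    (h : ∀ k i, Gl i (x (k + 1)) ≤ Gl i (x k) ∧ Gu i (x (k + 1)) ≤ Gu i (x k)) (k : ℕ) :
    x k ∈ LevelSet m n Gl Gu (x 0) := by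
  induction k with
  | zero => exact fun i => ⟨le_rfl, le_rfl⟩
  | succ k ih => exact fun i => ⟨(h k i).1.trans (ih i).1, (h k i).2.trans (ih i).2⟩

theorem StrongWolfe.one_sub_mul_neg_psi_le {ρ σ t C : ℝ} {x d : EuclideanSpace ℝ (Fin n)}
    (hw : StrongWolfe m n Gl Gu ρ σ x d t) (hdesc : psi m n Gl Gu x d < 0) (ht : 0 ≤ t)
    (hC : psi m n Gl Gu (x + t • d) d ≤ psi m n Gl Gu x d + C * ‖t • d‖ * ‖d‖) :
    (1 - σ) * -psi m n Gl Gu x d ≤ C * t * ‖d‖ ^ 2 := by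
  have hcurv := (abs_le.1 hw.2).1
  rw [abs_of_neg hdesc] at hcurv
  rw [norm_smul, Real.norm_of_nonneg ht] at hC
  linarith

theorem StrongWolfe.half_sq_norm_le [Nonempty (Fin m)] {ρ σ t β : ℝ}
    {x d v : EuclideanSpace ℝ (Fin n)} (hw : StrongWolfe m n Gl Gu ρ σ x d t)
    (hdesc : psi m n Gl Gu x d < 0) (hβ : 0 ≤ β)
    (hmin : ∀ w, psi m n Gl Gu (x + t • d) v + 1 / 2 * ‖v‖ ^ 2 ≤
      psi m n Gl Gu (x + t • d) w + 1 / 2 * ‖w‖ ^ 2) :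
    ‖v‖ ^ 2 / 2 ≤ -psi m n Gl Gu (x + t • d) (v + β • d) + σ * β * -psi m n Gl Gu x d := by
  have hv := hmin 0
  rw [psi_zero, norm_zero] at hv
  have hcurv := (abs_le.1 hw.2).2
  rw [abs_of_neg hdesc] at hcurv
  have hadd := psi_add_le (Gl := Gl) (Gu := Gu) (x + t • d) v (β • d)
  have hsmul := psi_smul_le (Gl := Gl) (Gu := Gu) (x + t • d) d hβ
  nlinarith [mul_le_mul_of_nonneg_left hcurv hβ]

theorem summable_sq_psi_div_norm_of_strongWolfe [Nonempty (Fin m)] {ρ σ : ℝ}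
    {x d : ℕ → EuclideanSpace ℝ (Fin n)} {t : ℕ → ℝ} (hρ : 0 < ρ) (hσ : σ < 1)
    (hx : ∀ k, x (k + 1) = x k + t k • d k) (ht : ∀ k, 0 < t k)
    (hdesc : ∀ k, psi m n Gl Gu (x k) (d k) < 0)
    (hw : ∀ k, StrongWolfe m n Gl Gu ρ σ (x k) (d k) (t k))
    (hA1 : AssumptionA1 m n Gl Gu (x 0)) (hA2 : AssumptionA2 m n Gl Gu (x 0)) :
    Summable fun k => (psi m n Gl Gu (x k) (d k) / ‖d k‖) ^ 2 := by
  have hsuff : ∀ k i, Gl i (x (k + 1)) ≤ Gl i (x k) + ρ * t k * psi m n Gl Gu (x k) (d k) ∧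
      Gu i (x (k + 1)) ≤ Gu i (x k) + ρ * t k * psi m n Gl Gu (x k) (d k) := fun k =>
    hx k ▸ (hw k).1
  have hneg : ∀ k, ρ * t k * psi m n Gl Gu (x k) (d k) < 0 := fun k =>
    mul_neg_of_pos_of_neg (mul_pos hρ (ht k)) (hdesc k)
  have hmono : ∀ k i, Gl i (x (k + 1)) ≤ Gl i (x k) ∧ Gu i (x (k + 1)) ≤ Gu i (x k) :=
    fun k i => ⟨by linarith [(hsuff k i).1, hneg k], by linarith [(hsuff k i).2, hneg k]⟩
  have hlev := mem_levelSet_of_forall_succ_le hmono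
  obtain ⟨C, hC⟩ := hA1.exists_psi_le_add
  obtain i : Fin m := Classical.arbitrary _
  obtain ⟨⟨c, hc⟩, -⟩ := hA2 x hlev (fun i k => hmono k i) i
  have hts : Summable fun k => t k * -psi m n Gl Gu (x k) (d k) :=
    (summable_mul_left_iff hρ.ne').1 <| summable_of_le_sub_succ (f := fun k => Gl i (x k))
      (fun k => by nlinarith [hneg k]) (fun k => by linarith [(hsuff k i).1]) hc
  refine .of_nonneg_of_le (fun k => sq_nonneg _) (fun k => ?_) (hts.mul_left (C / (1 - σ)))
  have hstep := (hw k).one_sub_mul_neg_psi_le (hdesc k) (ht k).le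
    (by simpa [hx k] using hC _ (hlev (k + 1)) _ (hlev k) (d k))
  have hD := norm_pos_iff.2 (ne_zero_of_psi_neg (hdesc k))
  rw [div_pow, div_le_iff₀ (by positivity), div_mul_eq_mul_div, div_mul_eq_mul_div,
    le_div_iff₀ (sub_pos.2 hσ)]
  nlinarith [mul_le_mul_of_nonneg_left hstep (neg_nonneg.2 (hdesc k).le)]

end Iteration

theorem general_convergence_strong_wolfe_general (m n : ℕ) (hm : 0 < m)
    (Gl Gu : Fin m → EuclideanSpace ℝ (Fin n) → ℝ)
    (vv : EuclideanSpace ℝ (Fin n) → EuclideanSpace ℝ (Fin n))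
    (hvmin : ∀ y w : EuclideanSpace ℝ (Fin n),
      psi m n Gl Gu y (vv y) + (1/2) * ‖vv y‖^2 ≤ psi m n Gl Gu y w + (1/2) * ‖w‖^2)
    (ρ σ : ℝ) (hρ : 0 < ρ) (hρσ : ρ < σ) (hσ : σ < 1)
    (x d : ℕ → EuclideanSpace ℝ (Fin n)) (t : ℕ → ℝ) (β : ℕ → ℝ)
    (hx : ∀ k : ℕ, x (k+1) = x k + t k • d k)
    (ht : ∀ k : ℕ, 0 < t k)
    (hdk : ∀ k : ℕ, d (k+1) = vv (x (k+1)) + β (k+1) • d k)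
    (hA1 : AssumptionA1 m n Gl Gu (x 0))
    (hA2 : AssumptionA2 m n Gl Gu (x 0))
    (hdiv : ¬ Summable (fun k : ℕ => 1 / ‖d k‖^2))
    (hβ : ∀ k : ℕ, 0 ≤ β (k+1))
    (hdesc : ∀ k : ℕ, psi m n Gl Gu (x k) (d k) < 0)
    (hw : ∀ k : ℕ, StrongWolfe m n Gl Gu ρ σ (x k) (d k) (t k)) :
    Filter.liminf (fun k : ℕ => ‖vv (x k)‖) Filter.atTop = 0 := by
  have : Nonempty (Fin m) := ⟨⟨0, hm⟩⟩
  have hrec : ∀ k, ‖vv (x (k + 1))‖ ^ 2 / 2 ≤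
      -psi m n Gl Gu (x (k + 1)) (d (k + 1)) + σ * β (k + 1) * -psi m n Gl Gu (x k) (d k) := by
    intro k
    have hmin := hvmin (x (k + 1))
    rw [hdk k]
    rw [hx k] at hmin ⊢
    exact (hw k).half_sq_norm_le (hdesc k) (hβ k) hmin
  have hβd : ∀ k, β (k + 1) * ‖d k‖ ≤ ‖d (k + 1)‖ + ‖vv (x (k + 1))‖ := fun k => calc
    β (k + 1) * ‖d k‖ = ‖d (k + 1) - vv (x (k + 1))‖ := by
      rw [hdk k, add_sub_cancel_left, norm_smul, Real.norm_of_nonneg (hβ k)]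
    _ ≤ ‖d (k + 1)‖ + ‖vv (x (k + 1))‖ := norm_sub_le _ _
  refine liminf_eq_zero_of_frequently_lt (fun _ => norm_nonneg _) fun γ hγ =>
    frequently_lt_of_not_summable_inv_sq (hρ.trans hρσ).le hγ
      (fun k => (neg_pos.2 (hdesc k)).le) (fun k => norm_pos_iff.2 (ne_zero_of_psi_neg (hdesc k)))
      ?_ hdiv hrec hβd
  simpa only [neg_div, neg_sq] using
    summable_sq_psi_div_norm_of_strongWolfe hρ hσ hx ht hdesc hw hA1 hA2

theorem general_convergence_strong_wolfe (m n : ℕ) (hm : 0 < m) (hn : 0 < n)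
    (Gl Gu : Fin m → EuclideanSpace ℝ (Fin n) → ℝ)
    (hGl : ∀ i, ContDiff ℝ 1 (Gl i)) (hGu : ∀ i, ContDiff ℝ 1 (Gu i))
    (hle : ∀ (i : Fin m) (x : EuclideanSpace ℝ (Fin n)), Gl i x ≤ Gu i x)
    (vv : EuclideanSpace ℝ (Fin n) → EuclideanSpace ℝ (Fin n))
    (hvmin : ∀ y w : EuclideanSpace ℝ (Fin n),
      psi m n Gl Gu y (vv y) + (1/2) * ‖vv y‖^2 ≤ psi m n Gl Gu y w + (1/2) * ‖w‖^2)
    (ρ σ : ℝ) (hρ : 0 < ρ) (hρσ : ρ < σ) (hσ : σ < 1)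
    (x d : ℕ → EuclideanSpace ℝ (Fin n)) (t : ℕ → ℝ) (β : ℕ → ℝ)
    (hx : ∀ k : ℕ, x (k+1) = x k + t k • d k)
    (ht : ∀ k : ℕ, 0 < t k)
    (hd0 : d 0 = vv (x 0))
    (hdk : ∀ k : ℕ, d (k+1) = vv (x (k+1)) + β (k+1) • d k)
    (hvne : ∀ k : ℕ, vv (x k) ≠ 0)
    (hA1 : AssumptionA1 m n Gl Gu (x 0))
    (hA2 : AssumptionA2 m n Gl Gu (x 0))
    (hdiv : ¬ Summable (fun k : ℕ => 1 / ‖d k‖^2))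
    (hβ : ∀ k : ℕ, 0 ≤ β (k+1))
    (hdesc : ∀ k : ℕ, psi m n Gl Gu (x k) (d k) < 0)
    (hw : ∀ k : ℕ, StrongWolfe m n Gl Gu ρ σ (x k) (d k) (t k)) :
    Filter.liminf (fun k : ℕ => ‖vv (x k)‖) Filter.atTop = 0 :=
  general_convergence_strong_wolfe_general m n hm Gl Gu vv hvmin ρ σ hρ hρσ hσ x d t β hx ht hdk hA1
    hA2 hdiv hβ hdesc hw
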